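/- Let M ⊆ E be a smooth embedded submanifold, let R be a retraction on M, and let C ⊆ M be compact. Then there exist a radius r > 0 and constants α, β ≥ 0 such that for all x ∈ C and all ξ ∈ T_xM with ‖ξ‖ ≤ r one has ‖R_x(ξ) − x‖ ≤ α‖ξ‖ and ‖R_x(ξ) − x − ξ‖ ≤ β‖ξ‖². -/

import Mathlib

open Set Filter Topology

noncomputable section

variable {E : Type*} [NormedAddCommGroup E] [InnerProductSpace ℝ E] [FiniteDimensional ℝ E]

open Classical in
/-- The indicator function of a set `M` (`0` on `M`, `+∞` elsewhere), with values in `EReal`. -/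
def indicatorFun (M : Set E) (x : E) : EReal := if x ∈ M then 0 else ⊤

/-- The Fréchet (regular) subdifferential of an extended-real-valued function `g` at `x`. -/
def frechetSubdiff (g : E → EReal) (x : E) : Set E :=
  {v | ∀ ε : ℝ, 0 < ε →
    ∀ᶠ y in 𝓝 x, g x + (((inner ℝ v (y - x) : ℝ) - ε * ‖y - x‖ : ℝ) : EReal) ≤ g y}

/-- The limiting (Mordukhovich) subdifferential of `g` at `x`. -/
def limitingSubdiff (g : E → EReal) (x : E) : Set E :=
  {v | ∃ xs vs : ℕ → E,
    Tendsto xs atTop (𝓝 x) ∧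
    Tendsto (fun n => g (xs n)) atTop (𝓝 (g x)) ∧
    (∀ n, vs n ∈ frechetSubdiff g (xs n)) ∧
    Tendsto vs atTop (𝓝 v)}

/-- The projectional limiting subdifferential of `g` at `x` relative to `M`:
the orthogonal projection onto the tangent space `T x` of the limiting
subdifferential of `g + δ_M` at `x`. -/
def projSubdiff (g : E → ℝ) (M : Set E) (T : E → Submodule ℝ E) (x : E) : Set E :=
  (fun v => (((T x).orthogonalProjection v : T x) : E)) ''
    limitingSubdiff (fun y => (g y : EReal) + indicatorFun M y) x

/-- `M ⊆ E` is a smooth embedded submanifold with tangent spaces `T x`: around each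
point of `M` there is a `C¹` local defining function with surjective derivative at
that point, and on `M` the tangent space is the kernel of the derivative. -/
def IsSubmanifold (M : Set E) (T : E → Submodule ℝ E) : Prop :=
  ∀ x ∈ M, ∃ (m : ℕ) (U : Set E) (F : E → (Fin m → ℝ)),
    IsOpen U ∧ x ∈ U ∧ ContDiffOn ℝ 1 F U ∧
    Function.Surjective ⇑(fderiv ℝ F x) ∧
    M ∩ U = {y ∈ U | F y = 0} ∧
    ∀ y ∈ M ∩ U, T y = LinearMap.ker (fderiv ℝ F y : E →ₗ[ℝ] (Fin m → ℝ))

/-- A retraction on the submanifold `M` with tangent spaces `T`: a `C²` map on the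
tangent bundle with values in `M` such that `R_x(0) = x` and `DR_x(0) = id`. -/
structure Retraction (M : Set E) (T : E → Submodule ℝ E) where
  R : E → E → E
  mem_target : ∀ x ∈ M, ∀ ξ ∈ T x, R x ξ ∈ M
  map_zero : ∀ x ∈ M, R x 0 = x
  smooth : ContDiffOn ℝ 2 (fun p : E × E => R p.1 p.2) {p : E × E | p.1 ∈ M ∧ p.2 ∈ T p.1}
  deriv_id : ∀ x ∈ M, ∀ ξ ∈ T x, HasDerivAt (fun t : ℝ => R x (t • ξ)) ξ 0

/-! Along the segment `t ↦ (x, t • ξ)`, which stays in the tangent bundle, the map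
`(x, ξ) ↦ R_x(ξ)` is `C²`, so its second-order Taylor remainder is bounded by a local bound on
its second derivative times `‖ξ‖²`, uniformly for base points near a given point of `M`.
Compactness of `C` makes the radius and the constant uniform, and the first-order bound
follows from the second-order one by the triangle inequality. -/

section

variable {X Y : Type*} [NormedAddCommGroup X] [NormedSpace ℝ X]
  [NormedAddCommGroup Y] [NormedSpace ℝ Y]

theorem norm_sub_sub_le_of_norm_deriv2_le_segment_01 {g φ ψ : ℝ → Y} {K : ℝ}
    (hg : ∀ t ∈ Icc (0 : ℝ) 1, HasDerivWithinAt g (φ t) (Icc 0 1) t)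
    (hφ : ∀ t ∈ Icc (0 : ℝ) 1, HasDerivWithinAt φ (ψ t) (Icc 0 1) t)
    (hψ : ∀ t ∈ Ico (0 : ℝ) 1, ‖ψ t‖ ≤ K) :
    ‖g 1 - g 0 - φ 0‖ ≤ K := by
  have hK : 0 ≤ K := (norm_nonneg _).trans (hψ 0 ⟨le_rfl, zero_lt_one⟩)
  have hφ_sub : ∀ t ∈ Ico (0 : ℝ) 1, ‖φ t - φ 0‖ ≤ K := fun t ht => by
    have := norm_image_sub_le_of_norm_deriv_le_segment' hφ hψ t (Ico_subset_Icc_self ht)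
    nlinarith [ht.1, ht.2]
  have hG : ∀ t ∈ Icc (0 : ℝ) 1,
      HasDerivWithinAt (fun t => g t - t • φ 0) (φ t - φ 0) (Icc 0 1) t := fun t ht => by
    simpa using (hg t ht).fun_sub ((hasDerivWithinAt_id t _).smul_const (φ 0))
  simpa [sub_right_comm] using norm_image_sub_le_of_norm_deriv_le_segment_01' hG hφ_sub

/-- The first-order term `f'` is taken along the segment because derivatives within `s`
need not be unique. -/
theorem ContDiffWithinAt.exists_norm_sub_sub_le_sq {f : X → Y} {s : Set X} {x : X}
    (hf : ContDiffWithinAt ℝ 2 f s x) :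
    ∃ δ > 0, ∃ B, ∀ y v f', (∀ t ∈ Icc (0 : ℝ) 1, y + t • v ∈ s) → ‖y - x‖ < δ → ‖v‖ < δ →
      HasDerivWithinAt (fun t : ℝ => f (y + t • v)) f' (Icc 0 1) 0 →
      ‖f (y + v) - f y - f'‖ ≤ B * ‖v‖ ^ 2 := by
  obtain ⟨u, hu, p, htay⟩ := contDiffWithinAt_nat.1 hf
  have hxu : x ∈ u := mem_of_mem_nhdsWithin (mem_insert _ _) hu
  set B := ‖p x 2‖ + 1
  obtain ⟨ε, hε, hball⟩ : ∃ ε > (0 : ℝ), ∀ z ∈ s, ‖z - x‖ < ε → z ∈ u ∧ ‖p z 2‖ ≤ B := by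
    have hbound : ∀ᶠ z in 𝓝[u] x, ‖p z 2‖ < B :=
      (htay.cont 2 le_rfl x hxu).norm.eventually (gt_mem_nhds (lt_add_one _))
    obtain ⟨ε, hε, hsub⟩ := Metric.mem_nhdsWithin_iff.1
      (inter_mem hu (nhdsWithin_le_of_mem hu hbound))
    refine ⟨ε, hε, fun z hz hzx => ?_⟩
    exact (hsub ⟨mem_ball_iff_norm.2 hzx, mem_insert_of_mem _ hz⟩).imp id le_of_lt
  refine ⟨ε / 2, half_pos hε, B, fun y v f' hseg hy hv hf' => ?_⟩
  set c : ℝ → X := fun t => y + t • v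
  have hc_near : ∀ t ∈ Icc (0 : ℝ) 1, c t ∈ u ∧ ‖p (c t) 2‖ ≤ B := fun t ht => by
    refine hball _ (hseg t ht) ?_
    calc ‖c t - x‖ = ‖(y - x) + t • v‖ := by simp only [c]; abel_nf
      _ ≤ ‖y - x‖ + ‖v‖ := by
          grw [norm_add_le, norm_smul, Real.norm_of_nonneg ht.1]
          nlinarith [norm_nonneg v, ht.2]
      _ < ε := by linarith
  have hmaps : MapsTo c (Icc 0 1) u := fun t ht => (hc_near t ht).1
  have hc : ∀ t, HasDerivWithinAt c v (Icc 0 1) t := fun t => by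
    simpa [c] using (((hasDerivAt_id t).smul_const v).const_add y).hasDerivWithinAt (s := Icc 0 1)
  have hg : ∀ t ∈ Icc (0 : ℝ) 1,
      HasDerivWithinAt (f ∘ c) (p (c t) 1 ![v]) (Icc 0 1) t := fun t ht => by
    simpa using
      (htay.hasFDerivWithinAt (by norm_num) (hmaps ht)).comp_hasDerivWithinAt t (hc t) hmaps
  have hφ : ∀ t ∈ Icc (0 : ℝ) 1,
      HasDerivWithinAt (fun t => p (c t) 1 ![v]) (p (c t) 2 ![v, v]) (Icc 0 1) t := fun t ht =>
    (ContinuousMultilinearMap.apply ℝ _ Y ![v]).hasFDerivAt.comp_hasDerivWithinAt t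
      ((htay.fderivWithin 1 (by norm_num) _ (hmaps ht)).comp_hasDerivWithinAt t (hc t) hmaps)
  have hψ : ∀ t ∈ Ico (0 : ℝ) 1, ‖p (c t) 2 ![v, v]‖ ≤ B * ‖v‖ ^ 2 := fun t ht => by
    grw [(p (c t) 2).le_opNorm, (hc_near t (Ico_subset_Icc_self ht)).2]
    simp [Fin.prod_univ_two, sq]
  have hφ0 : p (c 0) 1 ![v] = f' :=
    (uniqueDiffOn_Icc zero_lt_one 0 (left_mem_Icc.2 zero_le_one)).eq_deriv _
      (hg 0 (left_mem_Icc.2 zero_le_one)) hf'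
  simpa [c, ← hφ0] using norm_sub_sub_le_of_norm_deriv2_le_segment_01 hg hφ hψ

end

theorem IsCompact.exists_forall_le_mul_sq {X V : Type*} [TopologicalSpace X]
    [SeminormedAddCommGroup V] {C : Set X} (hC : IsCompact C) {A : X → Set V} {g : X → V → ℝ}
    (hloc : ∀ x ∈ C, ∃ r > 0, ∃ β,
      ∀ᶠ y in 𝓝[C] x, ∀ ξ ∈ A y, ‖ξ‖ ≤ r → g y ξ ≤ β * ‖ξ‖ ^ 2) :
    ∃ r > 0, ∃ β ≥ 0, ∀ y ∈ C, ∀ ξ ∈ A y, ‖ξ‖ ≤ r → g y ξ ≤ β * ‖ξ‖ ^ 2 := by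
  refine hC.induction_on (p := fun s => ∃ r > 0, ∃ β ≥ 0,
      ∀ y ∈ s, ∀ ξ ∈ A y, ‖ξ‖ ≤ r → g y ξ ≤ β * ‖ξ‖ ^ 2)
    ⟨1, one_pos, 0, le_rfl, by simp⟩ ?_ ?_ ?_
  · rintro s t hst ⟨r, hr, β, hβ, h⟩
    exact ⟨r, hr, β, hβ, fun y hy => h y (hst hy)⟩
  · rintro s t ⟨r₁, hr₁, β₁, hβ₁, h₁⟩ ⟨r₂, hr₂, β₂, -, h₂⟩
    refine ⟨min r₁ r₂, lt_min hr₁ hr₂, max β₁ β₂, le_max_of_le_left hβ₁, ?_⟩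
    rintro y (hy | hy) ξ hξ hξr
    · grw [h₁ y hy ξ hξ (hξr.trans (min_le_left _ _)), ← le_max_left]
    · grw [h₂ y hy ξ hξ (hξr.trans (min_le_right _ _)), ← le_max_right]
  · intro x hx
    obtain ⟨r, hr, β, h⟩ := hloc x hx
    refine ⟨_, h, r, hr, max β 0, le_max_right _ _, fun y hy ξ hξ hξr => ?_⟩
    grw [hy ξ hξ hξr, ← le_max_left]

omit [FiniteDimensional ℝ E] in
theorem Retraction.exists_norm_sub_sub_le_sq {M : Set E} {T : E → Submodule ℝ E}
    (Ret : Retraction M T) {x : E} (hx : x ∈ M) :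
    ∃ r > 0, ∃ β, ∀ᶠ y in 𝓝[M] x, ∀ ξ ∈ T y, ‖ξ‖ ≤ r →
      ‖Ret.R y ξ - y - ξ‖ ≤ β * ‖ξ‖ ^ 2 := by
  obtain ⟨δ, hδ, β, hβ⟩ :=
    (Ret.smooth (x, 0) ⟨hx, (T x).zero_mem⟩).exists_norm_sub_sub_le_sq
  refine ⟨δ / 2, half_pos hδ, β, ?_⟩
  filter_upwards [self_mem_nhdsWithin, nhdsWithin_le_nhds (Metric.ball_mem_nhds x hδ)]
    with y hyM hyx ξ hξ hξr
  simpa [Ret.map_zero y hyM] using hβ (y, 0) (0, ξ) ξ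
    (fun t _ => by simpa using ⟨hyM, (T y).smul_mem t hξ⟩)
    (by simpa [← dist_eq_norm] using hyx) (by simpa using hξr.trans_lt (half_lt_self hδ))
    (by simpa using (Ret.deriv_id y hyM ξ hξ).hasDerivWithinAt)

theorem stmt2_general (M : Set E) (T : E → Submodule ℝ E)
    (Ret : Retraction M T) (C : Set E) (hCM : C ⊆ M) (hC : IsCompact C) :
    ∃ r > (0:ℝ), ∃ α ≥ (0:ℝ), ∃ β ≥ (0:ℝ), ∀ x ∈ C, ∀ ξ ∈ T x, ‖ξ‖ ≤ r →
      ‖Ret.R x ξ - x‖ ≤ α * ‖ξ‖ ∧ ‖Ret.R x ξ - x - ξ‖ ≤ β * ‖ξ‖ ^ 2 := by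
  obtain ⟨r, hr, β, hβ, hrem⟩ := hC.exists_forall_le_mul_sq (A := fun y => T y)
    (g := fun y ξ => ‖Ret.R y ξ - y - ξ‖) fun x hx => by
      obtain ⟨r, hr, β, h⟩ := Ret.exists_norm_sub_sub_le_sq (hCM hx)
      exact ⟨r, hr, β, nhdsWithin_mono x hCM h⟩
  refine ⟨r, hr, 1 + β * r, by positivity, β, hβ, fun x hx ξ hξ hξr =>
    ⟨?_, hrem x hx ξ hξ hξr⟩⟩
  calc ‖Ret.R x ξ - x‖ = ‖(Ret.R x ξ - x - ξ) + ξ‖ := by rw [sub_add_cancel]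
    _ ≤ β * ‖ξ‖ ^ 2 + ‖ξ‖ := norm_add_le_of_le (hrem x hx ξ hξ hξr) le_rfl
    _ ≤ (1 + β * r) * ‖ξ‖ := by nlinarith [norm_nonneg ξ, mul_le_mul_of_nonneg_left hξr hβ]

/-- Uniform first- and second-order bounds for a retraction on a compact subset. -/
theorem stmt2 (M : Set E) (T : E → Submodule ℝ E) (hM : IsSubmanifold M T)
    (Ret : Retraction M T) (C : Set E) (hCM : C ⊆ M) (hC : IsCompact C) :
    ∃ r > (0:ℝ), ∃ α ≥ (0:ℝ), ∃ β ≥ (0:ℝ), ∀ x ∈ C, ∀ ξ ∈ T x, ‖ξ‖ ≤ r →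
      ‖Ret.R x ξ - x‖ ≤ α * ‖ξ‖ ∧ ‖Ret.R x ξ - x - ξ‖ ≤ β * ‖ξ‖ ^ 2 :=
  stmt2_general M T Ret C hCM hC

end
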